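/- arXiv:1405.1382 — 5 statements merged into one kernel-verified Lean document; each statement's English description precedes it below -/
import Mathlib

section
/- Let G be the graph K_D (for D > 1) consisting of two disjoint paths L_D^1 and L_D^2, each with D+1 vertices, a path L_{D-1} with D vertices, and an edge from every vertex of L_D^1 and of L_D^2 to one fixed endpoint c of the path L_{D-1}. Then G is connected and its diameter equals D. -/
def KD (D : ℕ) : SimpleGraph (Fin (D + 1) ⊕ Fin (D + 1) ⊕ Fin D) :=
  SimpleGraph.fromRel (fun x y =>
    match x, y with
    | Sum.inl i, Sum.inl j => (j : ℕ) = (i : ℕ) + 1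
    | Sum.inr (Sum.inl i), Sum.inr (Sum.inl j) => (j : ℕ) = (i : ℕ) + 1
    | Sum.inr (Sum.inr i), Sum.inr (Sum.inr j) => (j : ℕ) = (i : ℕ) + 1
    | Sum.inl _, Sum.inr (Sum.inr c) => (c : ℕ) = 0
    | Sum.inr (Sum.inl _), Sum.inr (Sum.inr c) => (c : ℕ) = 0
    | _, _ => False)

open SimpleGraph Sum

section aux
variable {D : ℕ}

lemma adjL (hD : 0 < D) (k : Fin (D+1)) :
    (KD D).Adj (inl k) (inr (inr ⟨0, hD⟩)) := by
  rw [KD, fromRel_adj]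
  exact ⟨by simp, Or.inl rfl⟩

lemma adjR (hD : 0 < D) (k : Fin (D+1)) :
    (KD D).Adj (inr (inl k)) (inr (inr ⟨0, hD⟩)) := by
  rw [KD, fromRel_adj]
  exact ⟨by simp, Or.inl rfl⟩

lemma adjP (i j : Fin D) (h : (j : ℕ) = (i : ℕ) + 1) :
    (KD D).Adj (inr (inr i)) (inr (inr j)) := by
  rw [KD, fromRel_adj]
  refine ⟨?_, Or.inl h⟩
  simp only [ne_eq, inr.injEq]
  intro he
  rw [he] at h
  omega

end aux

section main
variable {D : ℕ}

/-- walk along the inner path -/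
lemma walkP : ∀ (k : ℕ) (i j : Fin D), (j : ℕ) = (i : ℕ) + k →
    ∃ w : (KD D).Walk (inr (inr i)) (inr (inr j)), w.length = k := by
  intro k
  induction k with
  | zero =>
    intro i j h
    have : i = j := Fin.ext (by omega)
    subst this
    exact ⟨SimpleGraph.Walk.nil, rfl⟩
  | succ k ih =>
    intro i j h
    have hm : (i : ℕ) + k < D := by omega
    obtain ⟨w, hw⟩ := ih i ⟨(i : ℕ) + k, hm⟩ rfl
    refine ⟨w.concat (adjP _ j (by simp; omega)), ?_⟩
    simp [SimpleGraph.Walk.length_concat, hw]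

lemma reachC (hD : 0 < D) (v : Fin (D + 1) ⊕ Fin (D + 1) ⊕ Fin D) :
    (KD D).Reachable v (inr (inr ⟨0, hD⟩)) := by
  rcases v with k | k | i
  · exact (adjL hD k).reachable
  · exact (adjR hD k).reachable
  · obtain ⟨w, -⟩ := walkP (i : ℕ) ⟨0, hD⟩ i (by simp)
    exact w.reachable.symm

/-- potential function for the lower bound -/
def fpot : Fin (D + 1) ⊕ Fin (D + 1) ⊕ Fin D → ℕ
  | inr (inr i) => (i : ℕ) + 1
  | _ => 0

lemma adj_fpot {u v : Fin (D + 1) ⊕ Fin (D + 1) ⊕ Fin D} (h : (KD D).Adj u v) :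
    fpot v ≤ fpot u + 1 ∧ fpot u ≤ fpot v + 1 := by
  rw [KD, SimpleGraph.fromRel_adj] at h
  obtain ⟨-, h | h⟩ := h <;>
    rcases u with k | k | i <;> rcases v with k' | k' | i' <;>
    simp only [fpot] at * <;> omega

lemma walk_fpot {u v : Fin (D + 1) ⊕ Fin (D + 1) ⊕ Fin D} (w : (KD D).Walk u v) :
    fpot v ≤ fpot u + w.length ∧ fpot u ≤ fpot v + w.length := by
  induction w with
  | nil => simp
  | cons h w ih =>
    have h2 := adj_fpot h
    simp only [SimpleGraph.Walk.length_cons]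
    omega

end main

/-- For `D > 1`, the graph `K_D` is connected and its diameter equals `D`. -/
theorem stmt1 (D : ℕ) (hD : 1 < D) :
    (KD D).Connected ∧ (∀ u v, (KD D).dist u v ≤ D) ∧ (∃ u v, (KD D).dist u v = D) := by
  have hD0 : 0 < D := by omega
  set c : Fin (D + 1) ⊕ Fin (D + 1) ⊕ Fin D := inr (inr ⟨0, hD0⟩) with hc
  have hconn : (KD D).Connected := by
    rw [SimpleGraph.connected_iff]
    exact ⟨fun u v => (reachC hD0 u).trans (reachC hD0 v).symm, ⟨c⟩⟩
  have key : ∀ u v, (KD D).dist u v ≤ (KD D).dist u c + (KD D).dist c v :=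
    fun u v => hconn.dist_triangle
  -- distance from c to a path vertex
  have hcp : ∀ i : Fin D, (KD D).dist c (inr (inr i)) ≤ (i : ℕ) := by
    intro i
    obtain ⟨w, hw⟩ := walkP (D := D) (i : ℕ) ⟨0, hD0⟩ i (by simp)
    exact hw ▸ SimpleGraph.dist_le w
  have hpc : ∀ i : Fin D, (KD D).dist (inr (inr i)) c ≤ (i : ℕ) := by
    intro i; rw [SimpleGraph.dist_comm]; exact hcp i
  have hLc : ∀ k : Fin (D + 1), (KD D).dist (inl k) c ≤ 1 := fun k =>
    SimpleGraph.dist_le ((adjL hD0 k).toWalk) |>.trans (by simp)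
  have hRc : ∀ k : Fin (D + 1), (KD D).dist (inr (inl k)) c ≤ 1 := fun k =>
    SimpleGraph.dist_le ((adjR hD0 k).toWalk) |>.trans (by simp)
  have hcL : ∀ k : Fin (D + 1), (KD D).dist c (inl k) ≤ 1 := by
    intro k; rw [SimpleGraph.dist_comm]; exact hLc k
  have hcR : ∀ k : Fin (D + 1), (KD D).dist c (inr (inl k)) ≤ 1 := by
    intro k; rw [SimpleGraph.dist_comm]; exact hRc k
  have hpp : ∀ i i' : Fin D, (i : ℕ) ≤ (i' : ℕ) →
      (KD D).dist (inr (inr i)) (inr (inr i')) ≤ D := by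
    intro i i' hle
    obtain ⟨w, hw⟩ := walkP ((i' : ℕ) - (i : ℕ)) i i' (by omega)
    have h1 := SimpleGraph.dist_le w
    have h2 := i'.isLt
    omega
  have hub : ∀ u v, (KD D).dist u v ≤ D := by
    intro u v
    rcases u with k | k | i <;> rcases v with k' | k' | i'
    · have := key (inl k) (inl k'); have := hLc k; have := hcL k'; omega
    · have := key (inl k) (inr (inl k')); have := hLc k; have := hcR k'; omega
    · have := key (inl k) (inr (inr i')); have := hLc k; have := hcp i'
      have := i'.isLt; omega
    · have := key (inr (inl k)) (inl k'); have := hRc k; have := hcL k'; omega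
    · have := key (inr (inl k)) (inr (inl k')); have := hRc k; have := hcR k'; omega
    · have := key (inr (inl k)) (inr (inr i')); have := hRc k; have := hcp i'
      have := i'.isLt; omega
    · have := key (inr (inr i)) (inl k'); have := hpc i; have := hcL k'
      have := i.isLt; omega
    · have := key (inr (inr i)) (inr (inl k')); have := hpc i; have := hcR k'
      have := i.isLt; omega
    · rcases le_total (i : ℕ) (i' : ℕ) with h | h
      · exact hpp i i' h
      · rw [SimpleGraph.dist_comm]; exact hpp i' i h
  refine ⟨hconn, hub, inl 0, inr (inr ⟨D - 1, by omega⟩), ?_⟩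
  refine le_antisymm (hub _ _) ?_
  obtain ⟨w, hw⟩ := (hconn.preconnected (inl 0)
    (inr (inr ⟨D - 1, by omega⟩))).exists_walk_length_eq_dist
  have hf := (walk_fpot w).1
  simp only [fpot] at hf
  omega
end

section
/- Fix a deterministic algorithm in the acknowledged-broadcast model and suppose every finite extension of a bivalent execution fragment α by valid steps, followed by one valid step of a fixed process u, yields a univalent fragment. If α·s_u is 0-valent (where s_u is the next valid step of u after α) and some valid extension α'' of α is 1-valent, reached via intermediate bivalent fragments α_0 = α, α_1, ..., α_k with α_k 1-valent, then there exists an index î ∈ {0,...,k-1} and a valid step s_v of some process v ≠ u such that α_î · s_u is 0-valent and α_î · s_v · s_u is 1-valent. -/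
/-- Intermediate-index extraction step of the generalized FLP argument.
Fragments `α 0, …, α k` form a chain of valid extensions, `α (i+1)` obtained from
`α i` by appending the valid step `s i`; `appendU f` denotes appending to `f` the
next valid step of the fixed process `u`. Assuming every `α i · s_u` is univalent
(0- or 1-valent), `α 0 · s_u` is 0-valent, `α k` is 1-valent, and valency
propagates along valid extensions, there is an index `î < k` whose step is by a
process `v ≠ u` with `α î · s_u` 0-valent and `α î · s_v · s_u` 1-valent. -/
theorem stmt6 {Frag Step P : Type*} (k : ℕ) (hk : 0 < k)
    (α : Fin (k + 1) → Frag) (s : Fin k → Step)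
    (append : Frag → Step → Frag) (appendU : Frag → Frag)
    (proc : Step → P) (u : P)
    (zeroV oneV : Frag → Prop)
    (hstep : ∀ i : Fin k, α i.succ = append (α i.castSucc) (s i))
    (hexcl : ∀ f, ¬ (zeroV f ∧ oneV f))
    (huniv : ∀ i : Fin (k + 1), zeroV (appendU (α i)) ∨ oneV (appendU (α i)))
    (h0 : zeroV (appendU (α 0)))
    (hklast : oneV (α (Fin.last k)))
    (hmono0 : ∀ f, zeroV f → zeroV (appendU f))
    (hmono1 : ∀ f, oneV f → oneV (appendU f))
    (hu : ∀ i : Fin k, proc (s i) = u →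
      append (α i.castSucc) (s i) = appendU (α i.castSucc)) :
    ∃ i : Fin k, proc (s i) ≠ u ∧
      zeroV (appendU (α i.castSucc)) ∧ oneV (appendU (α i.succ)) := by
  by_contra hcon
  push_neg at hcon
  -- Show zeroV propagates along the whole chain
  have key : ∀ i : Fin k, zeroV (appendU (α i.castSucc)) → zeroV (appendU (α i.succ)) := by
    intro i hz
    by_cases hp : proc (s i) = u
    · have : α i.succ = appendU (α i.castSucc) := by rw [hstep i, hu i hp]
      rw [this]
      exact hmono0 _ hz
    · rcases huniv i.succ with h | h
      · exact h
      · exact absurd h (hcon i hp hz)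
  have all : ∀ n : ℕ, ∀ h : n ≤ k, zeroV (appendU (α ⟨n, Nat.lt_succ_of_le h⟩)) := by
    intro n
    induction n with
    | zero => intro h; exact h0
    | succ m ih =>
      intro h
      have hm : m < k := h
      have := key ⟨m, hm⟩ (by
        have : (⟨m, hm⟩ : Fin k).castSucc = ⟨m, Nat.lt_succ_of_le hm.le⟩ := rfl
        rw [this]; exact ih hm.le)
      simpa [Fin.succ] using this
  have hk' : zeroV (appendU (α (Fin.last k))) := by
    have := all k le_rfl
    simpa [Fin.last] using this
  exact hexcl _ ⟨hk', hmono1 _ hklast⟩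
end

section
/- Fix an execution of wPAXOS and a proposition p with originator u. Define, for each step s and node v, the quantity q(p,v,s) as (count of affirmative responses to p in v's acceptor queue after s) + (count of affirmative responses to p in the message v is currently sending, if not yet received) + (1 if v will generate an affirmative response to p after step s), and Q(p,s) = Σ_v q(p,v,s). Let c(p,s) be the count of affirmative responses to p received by u by step s, and a(p) the total number of acceptors that ever affirmatively respond to p. Then for every step s ≥ 0, Q(p,s) + c(p,s) ≤ a(p). -/
lemma update_sum_sub {V : Type*} [Fintype V] [DecidableEq V] (f : V → ℕ) (v : V) (k : ℕ)
    (hk : k ≤ f v) : (∑ x, Function.update f v (f v - k) x) + k = ∑ x, f x := by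
  rw [Finset.sum_update_of_mem (Finset.mem_univ v)]
  have h2 : ∑ x, f x = f v + ∑ x ∈ Finset.univ \ {v}, f x := by
    rw [← Finset.sum_update_of_mem (Finset.mem_univ v)]
    simp
  omega

lemma update_sum_add {V : Type*} [Fintype V] [DecidableEq V] (f : V → ℕ) (w : V) (k : ℕ) :
    (∑ x, Function.update f w (f w + k) x) = (∑ x, f x) + k := by
  rw [Finset.sum_update_of_mem (Finset.mem_univ w)]
  have h2 : ∑ x, f x = f w + ∑ x ∈ Finset.univ \ {w}, f x := by
    rw [← Finset.sum_update_of_mem (Finset.mem_univ w)]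
    simp
  omega

/-- Aggregation-safety invariant of wPAXOS (Lemma: `Q(p,s) + c(p,s) ≤ a(p)`).
`q s v` is the potential of node `v` after step `s` (queued affirmative-response
counts, in-flight counts, plus `1` if `v` will still respond affirmatively),
`c s` is the count of affirmative responses to `p` received by the originator `u`
by step `s`, and `a` is the number of acceptors that ever respond affirmatively.
Each step either (1) moves potential within a node, (2) transfers a count `k`
from a node `v` to a node `w`, or (3) delivers a count `k` to `u`. Then for every
step `s`, `(Σ_v q s v) + c s ≤ a`. -/
theorem stmt9 {V : Type*} [Fintype V] [DecidableEq V] (u : V)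
    (q : ℕ → V → ℕ) (c : ℕ → ℕ) (a : ℕ)
    (hinitQ : (∑ v, q 0 v) = a) (hinitc : c 0 = 0)
    (hstep : ∀ s,
      -- case 1: internal move (generating a response moves potential within v)
      (q (s + 1) = q s ∧ c (s + 1) = c s) ∨
      -- case 2: transfer of an aggregated count k from v to w ≠ u
      (∃ v w k, v ≠ w ∧ k ≤ q s v ∧
        q (s + 1) = Function.update (Function.update (q s) v (q s v - k)) w (q s w + k) ∧
        c (s + 1) = c s) ∨
      -- case 3: delivery of an aggregated count k to the originator u
      (∃ v k, k ≤ q s v ∧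
        q (s + 1) = Function.update (q s) v (q s v - k) ∧
        c (s + 1) = c s + k)) :
    ∀ s, (∑ v, q s v) + c s ≤ a := by
  intro s
  induction s with
  | zero => simp [hinitQ, hinitc]
  | succ n ih =>
    rcases hstep n with ⟨hq, hc⟩ | ⟨v, w, k, hvw, hk, hq, hc⟩ | ⟨v, k, hk, hq, hc⟩
    · rw [hq, hc]; exact ih
    · rw [hq, hc]
      set g := Function.update (q n) v (q n v - k) with hg
      have hgw : g w = q n w := by simp [hg, Function.update_of_ne (Ne.symm hvw)]
      have h1 : (∑ x, Function.update g w (q n w + k) x) = (∑ x, g x) + k := by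
        rw [← hgw]; exact update_sum_add g w k
      have h2 : (∑ x, g x) + k = ∑ x, q n x := update_sum_sub (q n) v k hk
      omega
    · rw [hq, hc]
      have h2 : (∑ x, Function.update (q n) v (q n v - k) x) + k = ∑ x, q n x :=
        update_sum_sub (q n) v k hk
      omega
end

section
/- In the two-phase consensus algorithm on a single-hop network with reliable acknowledged broadcast, if some node u sets status = decided(0) upon completing its phase-1 broadcast, then no node sets status = decided(1). Formally: if u's phase-1 broadcast completes before any node with input 1 completes its phase-1 broadcast, then every node with input 1 receives u's phase-1 message (carrying value 0) before completing phase 1, and therefore sets status = bivalent. -/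
/-- Two-phase consensus, phase-1 safety: `recvTime y x` is the time `y` receives
`x`'s phase-1 message, `ackTime1 x` the time `x`'s phase-1 broadcast is
acknowledged (all other nodes have received it by then), and `status y` is
`none` (bivalent) or `some b` (decided `b`, only possible if `b` is `y`'s input).
If node `u` with input `0` (`false`) completes its phase-1 broadcast before every
node with input `1` (`true`) does—so `u` sets `status = decided(0)`—then every
node with input `1` receives `u`'s phase-1 message before its own phase-1 ack and
hence sets `status = bivalent`; in particular no node sets `status = decided(1)`. -/
theorem stmt12 {V : Type*} (input : V → Bool)
    (recvTime : V → V → ℝ) (ackTime1 : V → ℝ)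
    (status : V → Option Bool) (u : V)
    -- acknowledged broadcast: everyone receives x's phase-1 message before x's ack
    (hbcast : ∀ x y : V, x ≠ y → recvTime y x < ackTime1 x)
    -- seeing the opposite input value before one's own phase-1 ack forces bivalent
    (hstatus : ∀ y x : V, x ≠ y → input x ≠ input y →
      recvTime y x < ackTime1 y → status y = none)
    -- a decided status carries the node's own input value
    (hstatus2 : ∀ y b, status y = some b → input y = b)
    (hu : input u = false)
    (hfirst : ∀ w, input w = true → ackTime1 u < ackTime1 w) :
    (∀ y, input y = true → recvTime y u < ackTime1 y ∧ status y = none) ∧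
      (∀ y, status y ≠ some true) := by
  have bivalent : ∀ y, input y = true → recvTime y u < ackTime1 y ∧ status y = none := by
    intro y hy
    have hinput : input u ≠ input y := by rw [hu, hy]; decide
    have hne : u ≠ y := ne_of_apply_ne input hinput
    -- u's broadcast reached y before u's ack, which precedes y's ack
    have hrecv : recvTime y u < ackTime1 y := (hbcast u y hne).trans (hfirst y hy)
    exact ⟨hrecv, hstatus y u hne hinput hrecv⟩
  refine ⟨bivalent, fun y hdecided => ?_⟩
  have hnone := (bivalent y (hstatus2 y true hdecided)).2
  exact Option.some_ne_none true (hdecided.symm.trans hnone)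
end

section
/- In the two-phase consensus algorithm, if node u has status decided(0) and node v has status bivalent, then v receives some message from u before v finishes its phase-2 broadcast. Consequently u ∈ W_v (v's witness set), v waits for u's phase-2 message, sees decided(0), and decides 0. -/
/-- Two-phase consensus, witness argument: if `u` has status `decided(0)`
(`some false`) and `v` has status bivalent (`none`), then `v` receives some
message from `u` before `v`'s phase-2 ack; consequently `u` is in `v`'s witness
set, `v` waits for `u`'s phase-2 message, sees `decided(0)`, and decides `0`. -/
theorem stmt13 {V : Type*}
    (recv1 recv2 : V → V → ℝ)  -- recvᵢ y x : time y receives x's phase-i message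
    (ack1 ack2 : V → ℝ)        -- phase-1 / phase-2 ack times
    (status : V → Option Bool) (decide : V → Bool)
    (u v : V) (huv : u ≠ v)
    (hu : status u = some false) (hv : status v = none)
    -- acknowledged broadcast: if v received no message from u by v's phase-2 ack,
    -- then u received v's phase-2 message before u's phase-1 ack
    (hkey : ∀ x y : V, x ≠ y →
      ¬ (recv1 y x < ack2 y ∨ recv2 y x < ack2 y) → recv2 x y < ack1 x)
    -- receiving a bivalent phase-2 message before one's phase-1 ack forces bivalent
    (hbiv : ∀ x : V, x ≠ u → status x = none → recv2 u x < ack1 u → status u = none)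
    -- decision rule: a bivalent node that has a witness with status decided(0)
    -- (heard from before its phase-2 ack) decides 0
    (hdecide : ∀ y : V, status y = none →
      (∃ x, (recv1 y x < ack2 y ∨ recv2 y x < ack2 y) ∧ status x = some false) →
      decide y = false) :
    (recv1 v u < ack2 v ∨ recv2 v u < ack2 v) ∧ decide v = false := by
  have hwitness : recv1 v u < ack2 v ∨ recv2 v u < ack2 v := by
    by_contra hsilent
    have hu_bivalent : status u = none := hbiv v huv.symm hv (hkey u v huv hsilent)
    exact Option.some_ne_none false (hu ▸ hu_bivalent)
  exact ⟨hwitness, hdecide v hv ⟨u, hwitness, hu⟩⟩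
end
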